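/- arXiv:2110.01386 — 6 statements merged into one kernel-verified Lean document; each statement's English description precedes it below -/
import Mathlib

section
/- Every expansive group action on a uniform space without isolated points is sensitive (i.e., not non-sensitive). -/
open scoped Uniformity

/-- Every expansive group action on a uniform space without isolated points
is sensitive (i.e., not non-sensitive). -/
theorem expansive_is_sensitive {G X : Type*} [Group G] [UniformSpace X]
    [MulAction G X] [T1Space X] [Nontrivial X]
    (hhomeo : ∀ g : G, Continuous fun x : X => g • x)
    (h_no_isolated : ∀ x : X, ¬ IsOpen ({x} : Set X))
    (hexp : ∃ ε ∈ 𝓤 X, ∀ x y : X, x ≠ y → ∃ g : G, (g • x, g • y) ∉ ε) :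
    ¬ (∀ ε ∈ 𝓤 X, ∃ O : Set X, IsOpen O ∧ O.Nonempty ∧
        ∀ (g : G) (x y : X), x ∈ O → y ∈ O → (g • x, g • y) ∈ ε) := by
  intro hns
  obtain ⟨ε, hε, hexp⟩ := hexp
  obtain ⟨O, hO, ⟨x, hx⟩, hsmall⟩ := hns ε hε
  have : ∃ y ∈ O, y ≠ x := by
    by_contra h
    push_neg at h
    have hOx : O = {x} := Set.eq_singleton_iff_unique_mem.mpr ⟨hx, h⟩
    exact h_no_isolated x (hOx ▸ hO)
  obtain ⟨y, hy, hyx⟩ := this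
  obtain ⟨g, hg⟩ := hexp y x hyx
  exact hg (hsmall g y x hy hx)
end

section
/- Let X be the one-point compactification ℝ ∪ {∞} of ℝ with the action of ℝ× extended by fixing ∞. Every pointwise limit of a net of multiplication maps (x ↦ cₓ for c ∈ ℝ×) in the product space X^X is either a multiplication map by some c ∈ ℝ×, the map sending every real x to 0 and ∞ to ∞, or the map sending every nonzero x (and ∞) to ∞ and 0 to 0. Hence the enveloping semigroup E(X) has exactly the elements ℝ× ∪ {0-map, ∞-map}. -/
/-!
A pointwise limit `f` of multiplication maps fixes `∞` and `0` and commutes with every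
homeomorphism `realMulMap c`, `c ≠ 0`; these are closed conditions. Hence `f x = x · f 1` for
`x ≠ 0`, and the value `f 1 ∈ ℝ ∪ {∞}` decides which of the three kinds of map `f` is.
Conversely, `c ↦ realMulMap c` is continuous on all of `ℝ` with `realMulMap 0 = realZeroMap`,
and tends to `realInftyMap` as `|c| → ∞`.
-/

open OnePoint

/-- Multiplication by `c` on `ℝ`, extended to the one-point compactification
by `∞ ↦ ∞`. -/
def realMulMap (c : ℝ) : OnePoint ℝ → OnePoint ℝ :=
  OnePoint.map (fun x : ℝ => c * x)

/-- The map sending every real point to `0` and `∞` to `∞`. -/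
def realZeroMap : OnePoint ℝ → OnePoint ℝ :=
  OnePoint.map (fun _ : ℝ => (0 : ℝ))

/- The map sending `0` to `0` and every other point (including `∞`) to `∞`. -/
open scoped Classical in
noncomputable def realInftyMap : OnePoint ℝ → OnePoint ℝ :=
  fun x => if x = ((0 : ℝ) : OnePoint ℝ) then ((0 : ℝ) : OnePoint ℝ) else ∞

open Filter Topology Set

theorem isClosed_setOf_comp_eq_comp {X : Type*} [TopologicalSpace X] [T2Space X] {g : X → X}
    (hg : Continuous g) : IsClosed {f : X → X | f ∘ g = g ∘ f} :=
  isClosed_eq (continuous_pi fun x => continuous_apply (g x))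
    (continuous_pi fun x => hg.comp (continuous_apply x))

@[simp]
theorem realMulMap_coe (c x : ℝ) : realMulMap c x = ((c * x : ℝ) : OnePoint ℝ) := rfl

@[simp]
theorem realMulMap_infty (c : ℝ) : realMulMap c ∞ = ∞ := rfl

theorem realMulMap_zero : realMulMap 0 = realZeroMap := by
  simp only [realMulMap, realZeroMap, zero_mul]

theorem realMulMap_comp_realMulMap (c d : ℝ) :
    realMulMap c ∘ realMulMap d = realMulMap (c * d) := by
  funext p
  induction p using OnePoint.rec <;> simp [mul_assoc]

theorem continuous_realMulMap_of_ne_zero {c : ℝ} (hc : c ≠ 0) : Continuous (realMulMap c) :=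
  (Homeomorph.mulLeft₀ c hc).onePointCongr.continuous

theorem continuous_realMulMap_apply (p : OnePoint ℝ) : Continuous fun c => realMulMap c p := by
  induction p using OnePoint.rec with
  | infty => exact continuous_const
  | coe x => exact continuous_coe.comp (continuous_mul_const x)

theorem continuous_realMulMap : Continuous realMulMap :=
  continuous_pi continuous_realMulMap_apply

@[simp]
theorem realInftyMap_zero : realInftyMap ((0 : ℝ) : OnePoint ℝ) = ((0 : ℝ) : OnePoint ℝ) :=
  if_pos rfl

theorem realInftyMap_of_ne_zero {p : OnePoint ℝ} (hp : p ≠ ((0 : ℝ) : OnePoint ℝ)) :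
    realInftyMap p = ∞ :=
  if_neg hp

theorem tendsto_realMulMap_cocompact :
    Tendsto realMulMap (cocompact ℝ) (𝓝 realInftyMap) := by
  refine tendsto_pi_nhds.2 fun p => ?_
  induction p using OnePoint.rec with
  | infty => simp [realInftyMap_of_ne_zero (infty_ne_coe 0)]
  | coe x =>
    rcases eq_or_ne x 0 with rfl | hx
    · simp
    · rw [realInftyMap_of_ne_zero (coe_injective.ne hx)]
      refine tendsto_coe_infty.comp ?_
      rw [coclosedCompact_eq_cocompact]
      exact (Homeomorph.mulRight₀ x hx).map_cocompact.le

theorem eq_realMulMap_or_eq_realInftyMap {f : OnePoint ℝ → OnePoint ℝ} (hf_infty : f ∞ = ∞)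
    (hf_zero : f ((0 : ℝ) : OnePoint ℝ) = ((0 : ℝ) : OnePoint ℝ))
    (hf_comm : ∀ c ≠ 0, f ∘ realMulMap c = realMulMap c ∘ f) :
    (∃ a, f = realMulMap a) ∨ f = realInftyMap := by
  have hf_coe (x : ℝ) (hx : x ≠ 0) : f x = realMulMap x (f (1 : ℝ)) := by
    simpa using congrFun (hf_comm x hx) (1 : ℝ)
  cases h1 : f (1 : ℝ) with
  | infty =>
    right
    funext p
    induction p using OnePoint.rec with
    | infty => rw [hf_infty, realInftyMap_of_ne_zero (infty_ne_coe 0)]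
    | coe x =>
      rcases eq_or_ne x 0 with rfl | hx
      · rw [hf_zero, realInftyMap_zero]
      · rw [hf_coe x hx, h1, realInftyMap_of_ne_zero (coe_injective.ne hx), realMulMap_infty]
  | coe a =>
    left
    refine ⟨a, funext fun p => ?_⟩
    induction p using OnePoint.rec with
    | infty => exact hf_infty
    | coe x =>
      rcases eq_or_ne x 0 with rfl | hx
      · simpa using hf_zero
      · simp [hf_coe x hx, h1, mul_comm]

theorem isClosed_setOf_realMulMap_equivariant :
    IsClosed {f : OnePoint ℝ → OnePoint ℝ |
      f ∞ = ∞ ∧ f ((0 : ℝ) : OnePoint ℝ) = ((0 : ℝ) : OnePoint ℝ) ∧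
        ∀ c ≠ 0, f ∘ realMulMap c = realMulMap c ∘ f} := by
  simp only [ofPred_and, ofPred_forall]
  refine (isClosed_eq (continuous_apply _) continuous_const).inter
    ((isClosed_eq (continuous_apply _) continuous_const).inter ?_)
  exact isClosed_iInter fun c => isClosed_iInter fun hc =>
    isClosed_setOf_comp_eq_comp (continuous_realMulMap_of_ne_zero hc)

/-- The enveloping semigroup of the action of `ℝˣ` on the one-point
compactification `ℝ ∪ {∞}` consists exactly of the multiplication maps by
nonzero reals, the `0`-map and the `∞`-map. -/
theorem envelopingSemigroup_onePoint_real :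
    closure {f : OnePoint ℝ → OnePoint ℝ | ∃ c : ℝ, c ≠ 0 ∧ f = realMulMap c} =
      {f : OnePoint ℝ → OnePoint ℝ | ∃ c : ℝ, c ≠ 0 ∧ f = realMulMap c} ∪
        {realZeroMap, realInftyMap} := by
  have hS : {f | ∃ c : ℝ, c ≠ 0 ∧ f = realMulMap c} = realMulMap '' {0}ᶜ := by
    ext f; simp [eq_comm]
  rw [hS]
  apply Subset.antisymm
  · refine (closure_minimal ?_ isClosed_setOf_realMulMap_equivariant).trans ?_
    · rintro _ ⟨d, -, rfl⟩
      refine ⟨rfl, by simp, fun c _ => ?_⟩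
      rw [realMulMap_comp_realMulMap, realMulMap_comp_realMulMap, mul_comm]
    · rintro f ⟨hf_infty, hf_zero, hf_comm⟩
      rcases eq_realMulMap_or_eq_realInftyMap hf_infty hf_zero hf_comm with ⟨a, rfl⟩ | rfl
      · rcases eq_or_ne a 0 with rfl | ha
        · simp [realMulMap_zero]
        · exact .inl ⟨a, ha, rfl⟩
      · simp
  · refine union_subset subset_closure (insert_subset ?_ (singleton_subset_iff.2 ?_))
    · rw [← realMulMap_zero]
      apply image_closure_subset_closure_image continuous_realMulMap
      simp
    · exact mem_closure_of_tendsto tendsto_realMulMap_cocompact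
        (eventually_of_mem isCompact_singleton.compl_mem_cocompact fun _ hc =>
          mem_image_of_mem _ hc)
end

section
/- Let X = ℝⁿ ∪ {∞} be the one-point compactification of ℝⁿ with the linear action of GL(n,ℝ) extended by fixing ∞. For any p in the enveloping semigroup E(X) (the pointwise closure of the translation maps in X^X), the set V_p = {v ∈ ℝⁿ : p(v) ≠ ∞} is a linear subspace of ℝⁿ and the restriction p|_{V_p} : V_p → ℝⁿ is a linear map. -/
open OnePoint Matrix

/-- The linear map `g` on `ℝⁿ` extended to the one-point compactification by
`∞ ↦ ∞`. -/
noncomputable def glTrans (n : ℕ) (g : GL (Fin n) ℝ) :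
    OnePoint (Fin n → ℝ) → OnePoint (Fin n → ℝ) :=
  OnePoint.map (fun v : Fin n → ℝ => (g : Matrix (Fin n) (Fin n) ℝ).mulVec v)

/-- Extraction of the finite part of a point of the one-point compactification. -/
noncomputable def uncN (n : ℕ) : OnePoint (Fin n → ℝ) → (Fin n → ℝ) :=
  fun x => OnePoint.elim x 0 id

@[simp] lemma uncN_coe (n : ℕ) (v : Fin n → ℝ) :
    uncN n ((v : OnePoint (Fin n → ℝ))) = v := rfl

lemma glTrans_coe (n : ℕ) (g : GL (Fin n) ℝ) (v : Fin n → ℝ) :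
    glTrans n g (v : OnePoint (Fin n → ℝ)) =
      (((g : Matrix (Fin n) (Fin n) ℝ).mulVec v : Fin n → ℝ) :
        OnePoint (Fin n → ℝ)) := rfl

lemma env_zero (n : ℕ) (p : OnePoint (Fin n → ℝ) → OnePoint (Fin n → ℝ))
    (hp : p ∈ closure (Set.range (glTrans n))) :
    p ((0 : Fin n → ℝ) : OnePoint (Fin n → ℝ)) =
      ((0 : Fin n → ℝ) : OnePoint (Fin n → ℝ)) := by
  obtain ⟨U, hS, hU⟩ := mem_closure_iff_ultrafilter.mp hp
  have hUp : Filter.Tendsto id (U : Filter _) (nhds p) := hU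
  have heval : Filter.Tendsto (fun f : OnePoint (Fin n → ℝ) → OnePoint (Fin n → ℝ) =>
      f ((0 : Fin n → ℝ) : OnePoint (Fin n → ℝ))) (U : Filter _)
      (nhds (p ((0 : Fin n → ℝ) : OnePoint (Fin n → ℝ)))) :=
    ((continuous_apply _).tendsto p).comp hUp
  have hSmem : ∀ᶠ f in (U : Filter _), f ∈ Set.range (glTrans n) :=
    Filter.eventually_of_mem hS (fun _ h => h)
  have h1 : Filter.Tendsto (fun f : OnePoint (Fin n → ℝ) → OnePoint (Fin n → ℝ) =>
      f ((0 : Fin n → ℝ) : OnePoint (Fin n → ℝ))) (U : Filter _)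
      (nhds (((0 : Fin n → ℝ) : OnePoint (Fin n → ℝ)))) := by
    apply Filter.Tendsto.congr' _ tendsto_const_nhds
    filter_upwards [hSmem] with f hf
    obtain ⟨g, rfl⟩ := hf
    rw [glTrans_coe]
    simp [Matrix.mulVec_zero]
  exact tendsto_nhds_unique heval h1

lemma env_key (n : ℕ) (p : OnePoint (Fin n → ℝ) → OnePoint (Fin n → ℝ))
    (hp : p ∈ closure (Set.range (glTrans n))) (a b : ℝ) (v w u z : Fin n → ℝ)
    (hv : p (v : OnePoint (Fin n → ℝ)) = (u : OnePoint (Fin n → ℝ)))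
    (hw : p (w : OnePoint (Fin n → ℝ)) = (z : OnePoint (Fin n → ℝ))) :
    p ((a • v + b • w : Fin n → ℝ) : OnePoint (Fin n → ℝ)) =
      ((a • u + b • z : Fin n → ℝ) : OnePoint (Fin n → ℝ)) := by
  obtain ⟨U, hS, hU⟩ := mem_closure_iff_ultrafilter.mp hp
  have hUp : Filter.Tendsto id (U : Filter _) (nhds p) := hU
  have heval : ∀ x : OnePoint (Fin n → ℝ),
      Filter.Tendsto (fun f : OnePoint (Fin n → ℝ) → OnePoint (Fin n → ℝ) => f x)
        (U : Filter _) (nhds (p x)) := fun x =>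
    ((continuous_apply x).tendsto p).comp hUp
  have hSmem : ∀ᶠ f in (U : Filter _), f ∈ Set.range (glTrans n) :=
    Filter.eventually_of_mem hS (fun _ h => h)
  have hext : ∀ (x y : Fin n → ℝ), p (x : OnePoint (Fin n → ℝ)) = (y : OnePoint (Fin n → ℝ)) →
      Filter.Tendsto (fun f : OnePoint (Fin n → ℝ) → OnePoint (Fin n → ℝ) =>
        uncN n (f (x : OnePoint (Fin n → ℝ)))) (U : Filter _) (nhds y) := by
    intro x y hxy
    rw [(OnePoint.isOpenEmbedding_coe).isEmbedding.tendsto_nhds_iff]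
    apply Filter.Tendsto.congr' _ (by rw [← hxy]; exact heval _)
    filter_upwards [hSmem] with f hf
    obtain ⟨g, rfl⟩ := hf
    rw [glTrans_coe]
    rfl
  have t1 := (hext v u hv).const_smul a
  have t2 := (hext w z hw).const_smul b
  have t3 : Filter.Tendsto (fun f : OnePoint (Fin n → ℝ) → OnePoint (Fin n → ℝ) =>
      ((a • uncN n (f (v : OnePoint (Fin n → ℝ))) +
        b • uncN n (f (w : OnePoint (Fin n → ℝ))) : Fin n → ℝ) : OnePoint (Fin n → ℝ)))
      (U : Filter _) (nhds (((a • u + b • z : Fin n → ℝ) : OnePoint (Fin n → ℝ)))) :=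
    (OnePoint.continuous_coe.tendsto _).comp (t1.add t2)
  have t4 : Filter.Tendsto (fun f : OnePoint (Fin n → ℝ) → OnePoint (Fin n → ℝ) =>
      f ((a • v + b • w : Fin n → ℝ) : OnePoint (Fin n → ℝ))) (U : Filter _)
      (nhds (((a • u + b • z : Fin n → ℝ) : OnePoint (Fin n → ℝ)))) := by
    apply Filter.Tendsto.congr' _ t3
    filter_upwards [hSmem] with f hf
    obtain ⟨g, rfl⟩ := hf
    rw [glTrans_coe, glTrans_coe, glTrans_coe, uncN_coe, uncN_coe]
    rw [Matrix.mulVec_add, Matrix.mulVec_smul, Matrix.mulVec_smul]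
  exact tendsto_nhds_unique (heval _) t4

lemma env_mem_iff (n : ℕ) (p : OnePoint (Fin n → ℝ) → OnePoint (Fin n → ℝ))
    (v : Fin n → ℝ) : p (v : OnePoint (Fin n → ℝ)) ≠ ∞ ↔
    ∃ u : Fin n → ℝ, p (v : OnePoint (Fin n → ℝ)) = (u : OnePoint (Fin n → ℝ)) := by
  rw [OnePoint.ne_infty_iff_exists]
  exact ⟨fun ⟨u, h⟩ => ⟨u, h.symm⟩, fun ⟨u, h⟩ => ⟨u, h.symm⟩⟩

/-- The subspace of vectors mapped to finite points. -/
noncomputable def envSub (n : ℕ) (p : OnePoint (Fin n → ℝ) → OnePoint (Fin n → ℝ))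
    (hp : p ∈ closure (Set.range (glTrans n))) : Submodule ℝ (Fin n → ℝ) where
  carrier := {v | p (v : OnePoint (Fin n → ℝ)) ≠ ∞}
  zero_mem' := by
    simp only [Set.mem_setOf_eq, env_zero n p hp]
    exact OnePoint.coe_ne_infty _
  add_mem' := by
    intro v w hv hw
    obtain ⟨u, hu⟩ := (env_mem_iff n p v).mp hv
    obtain ⟨z, hz⟩ := (env_mem_iff n p w).mp hw
    have := env_key n p hp 1 1 v w u z hu hz
    simp only [one_smul] at this
    simp only [Set.mem_setOf_eq, this]
    exact OnePoint.coe_ne_infty _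
  smul_mem' := by
    intro a v hv
    obtain ⟨u, hu⟩ := (env_mem_iff n p v).mp hv
    have := env_key n p hp a 0 v 0 u 0 hu (env_zero n p hp)
    simp only [zero_smul, add_zero] at this
    simp only [Set.mem_setOf_eq, this]
    exact OnePoint.coe_ne_infty _

/-- The restriction of `p` as a linear map. -/
noncomputable def envLin (n : ℕ) (p : OnePoint (Fin n → ℝ) → OnePoint (Fin n → ℝ))
    (hp : p ∈ closure (Set.range (glTrans n))) : envSub n p hp →ₗ[ℝ] (Fin n → ℝ) where
  toFun v := uncN n (p ((v : Fin n → ℝ) : OnePoint (Fin n → ℝ)))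
  map_add' := by
    rintro ⟨v, hv⟩ ⟨w, hw⟩
    obtain ⟨u, hu⟩ := (env_mem_iff n p v).mp hv
    obtain ⟨z, hz⟩ := (env_mem_iff n p w).mp hw
    have := env_key n p hp 1 1 v w u z hu hz
    simp only [one_smul] at this
    simp [this, hu, hz]
  map_smul' := by
    rintro a ⟨v, hv⟩
    obtain ⟨u, hu⟩ := (env_mem_iff n p v).mp hv
    have := env_key n p hp a 0 v 0 u 0 hu (env_zero n p hp)
    simp only [zero_smul, add_zero] at this
    simp [this, hu]

/-- For every element `p` of the enveloping semigroup of the `GL(n,ℝ)`-action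
on the one-point compactification of `ℝⁿ`, the set
`V_p = {v : p(v) ≠ ∞}` is a linear subspace of `ℝⁿ` and `p` restricted to
`V_p` is a linear map. -/
theorem env_semigroup_element_partial_linear (n : ℕ)
    (p : OnePoint (Fin n → ℝ) → OnePoint (Fin n → ℝ))
    (hp : p ∈ closure (Set.range (glTrans n))) :
    ∃ (V : Submodule ℝ (Fin n → ℝ)) (f : V →ₗ[ℝ] (Fin n → ℝ)),
      (∀ v : Fin n → ℝ, (p (v : OnePoint (Fin n → ℝ)) ≠ ∞) ↔ v ∈ V) ∧
      (∀ v : V, p ((v : Fin n → ℝ) : OnePoint (Fin n → ℝ)) =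
        ((f v : Fin n → ℝ) : OnePoint (Fin n → ℝ))) := by
  refine ⟨envSub n p hp, envLin n p hp, fun v => Iff.rfl, ?_⟩
  rintro ⟨v, hv⟩
  obtain ⟨u, hu⟩ := (env_mem_iff n p v).mp hv
  show p _ = ((uncN n (p ((v : Fin n → ℝ) : OnePoint (Fin n → ℝ))) : Fin n → ℝ) :
    OnePoint (Fin n → ℝ))
  rw [hu]
  rfl
end

section
/- The enveloping semigroup of the GL(n,ℝ)-action on the one-point compactification of ℝⁿ has cardinality at most 2^ℵ₀. -/
open OnePoint Matrix Filter Topology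

namespace EnvAux

variable {n : ℕ}

/-- The key structural property of elements of the enveloping semigroup. -/
def IsEnvLike (n : ℕ) (f : OnePoint (Fin n → ℝ) → OnePoint (Fin n → ℝ)) : Prop :=
  f ∞ = ∞ ∧ f ((0 : Fin n → ℝ) : OnePoint (Fin n → ℝ)) = ((0 : Fin n → ℝ) : OnePoint (Fin n → ℝ)) ∧
    ∀ (a b : ℝ) (v w x y : Fin n → ℝ), f ↑v = ↑x → f ↑w = ↑y →
      f ↑(a • v + b • w) = ↑(a • x + b • y)

lemma isEnvLike_of_mem_closure {f : OnePoint (Fin n → ℝ) → OnePoint (Fin n → ℝ)}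
    (hf : f ∈ closure (Set.range (glTrans n))) : IsEnvLike n f := by
  obtain ⟨F, hFne, htend⟩ :
      ∃ F : Filter (GL (Fin n) ℝ), F.NeBot ∧
        ∀ p, Tendsto (fun g => glTrans n g p) F (𝓝 (f p)) := by
    refine ⟨Filter.comap (glTrans n) (𝓝 f), ?_, ?_⟩
    · rw [Filter.comap_neBot_iff]
      intro t ht
      rcases mem_closure_iff_nhds.mp hf t ht with ⟨x, hxt, g, rfl⟩
      exact ⟨g, hxt⟩
    · exact fun p => tendsto_pi_nhds.mp tendsto_comap p
  have hfin : ∀ (v x : Fin n → ℝ), f ↑v = ↑x →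
      Tendsto (fun g : GL (Fin n) ℝ => (g : Matrix (Fin n) (Fin n) ℝ).mulVec v) F (𝓝 x) := by
    intro v x hvx
    have h1 := htend (↑v)
    rw [hvx] at h1
    have h2 : (fun g : GL (Fin n) ℝ => glTrans n g ↑v) =
        fun g : GL (Fin n) ℝ => ((((g : Matrix (Fin n) (Fin n) ℝ).mulVec v) : Fin n → ℝ) :
          OnePoint (Fin n → ℝ)) := by
      funext g; simp [glTrans]
    rw [h2] at h1
    exact (OnePoint.isOpenEmbedding_coe.isEmbedding.tendsto_nhds_iff).mpr h1
  refine ⟨?_, ?_, ?_⟩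
  · have h1 := htend ∞
    have h2 : (fun g : GL (Fin n) ℝ => glTrans n g ∞) =
        fun _ : GL (Fin n) ℝ => (∞ : OnePoint (Fin n → ℝ)) := by
      funext g; simp [glTrans]
    rw [h2] at h1
    exact tendsto_nhds_unique h1 tendsto_const_nhds
  · have h1 := htend ((0 : Fin n → ℝ) : OnePoint (Fin n → ℝ))
    have h2 : (fun g : GL (Fin n) ℝ => glTrans n g ((0 : Fin n → ℝ) : OnePoint (Fin n → ℝ))) =
        fun _ : GL (Fin n) ℝ => ((0 : Fin n → ℝ) : OnePoint (Fin n → ℝ)) := by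
      funext g; simp [glTrans]
    rw [h2] at h1
    exact tendsto_nhds_unique h1 tendsto_const_nhds
  · intro a b v w x y hvx hwy
    have hv := hfin v x hvx
    have hw := hfin w y hwy
    have h3 : Tendsto (fun g : GL (Fin n) ℝ =>
        (g : Matrix (Fin n) (Fin n) ℝ).mulVec (a • v + b • w)) F (𝓝 (a • x + b • y)) := by
      have heq : (fun g : GL (Fin n) ℝ =>
          (g : Matrix (Fin n) (Fin n) ℝ).mulVec (a • v + b • w)) =
          fun g : GL (Fin n) ℝ => a • (g : Matrix (Fin n) (Fin n) ℝ).mulVec v +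
            b • (g : Matrix (Fin n) (Fin n) ℝ).mulVec w := by
        funext g
        simp [Matrix.mulVec_add, Matrix.mulVec_smul]
      rw [heq]
      exact (hv.const_smul a).add (hw.const_smul b)
    have h4 : Tendsto (fun g : GL (Fin n) ℝ => glTrans n g ↑(a • v + b • w)) F
        (𝓝 (((a • x + b • y : Fin n → ℝ) : OnePoint (Fin n → ℝ)))) := by
      have heq : (fun g : GL (Fin n) ℝ => glTrans n g ↑(a • v + b • w)) =
          fun g : GL (Fin n) ℝ =>
            (((g : Matrix (Fin n) (Fin n) ℝ).mulVec (a • v + b • w) : Fin n → ℝ) :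
              OnePoint (Fin n → ℝ)) := by
        funext g; simp [glTrans]
      rw [heq]
      exact (OnePoint.continuous_coe.tendsto _).comp h3
    exact tendsto_nhds_unique (htend _) h4

/-- The "domain of finiteness" submodule of an envelope-like map. -/
def dom (f : OnePoint (Fin n → ℝ) → OnePoint (Fin n → ℝ)) (hf : IsEnvLike n f) :
    Submodule ℝ (Fin n → ℝ) where
  carrier := {v | f ↑v ≠ ∞}
  zero_mem' := by
    simp only [Set.mem_setOf_eq, hf.2.1]
    exact coe_ne_infty _
  add_mem' := by
    intro v w hv hw
    obtain ⟨x, hx⟩ := ne_infty_iff_exists.mp hv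
    obtain ⟨y, hy⟩ := ne_infty_iff_exists.mp hw
    have := hf.2.2 1 1 v w x y hx.symm hy.symm
    simp only [one_smul] at this
    simp only [Set.mem_setOf_eq, this]
    exact coe_ne_infty _
  smul_mem' := by
    intro a v hv
    obtain ⟨x, hx⟩ := ne_infty_iff_exists.mp hv
    have := hf.2.2 a 0 v 0 x 0 hx.symm hf.2.1
    simp only [smul_zero, add_zero] at this
    simp only [Set.mem_setOf_eq, this]
    exact coe_ne_infty _

open Classical in
/-- The finite part of an envelope-like map, as a function `ℝⁿ → ℝⁿ`. -/
noncomputable def L (f : OnePoint (Fin n → ℝ) → OnePoint (Fin n → ℝ)) (v : Fin n → ℝ) :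
    Fin n → ℝ :=
  if h : ∃ x : Fin n → ℝ, f ↑v = ↑x then h.choose else 0

lemma L_spec {f : OnePoint (Fin n → ℝ) → OnePoint (Fin n → ℝ)} {hf : IsEnvLike n f}
    {v : Fin n → ℝ} (hv : v ∈ dom f hf) : f ↑v = ↑(L f v) := by
  have hne : f ↑v ≠ ∞ := hv
  obtain ⟨x, hx⟩ := ne_infty_iff_exists.mp hne
  have h : ∃ x : Fin n → ℝ, f ↑v = ↑x := ⟨x, hx.symm⟩
  simp only [L]
  rw [dif_pos h]
  exact h.choose_spec

lemma L_comb {f : OnePoint (Fin n → ℝ) → OnePoint (Fin n → ℝ)} {hf : IsEnvLike n f}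
    (a b : ℝ) {v w : Fin n → ℝ} (hv : v ∈ dom f hf) (hw : w ∈ dom f hf) :
    L f (a • v + b • w) = a • L f v + b • L f w := by
  have h1 := hf.2.2 a b v w (L f v) (L f w) (L_spec hv) (L_spec hw)
  have hmem : a • v + b • w ∈ dom f hf := (dom f hf).add_mem ((dom f hf).smul_mem a hv)
    ((dom f hf).smul_mem b hw)
  have h2 := L_spec hmem
  rw [h1] at h2
  exact (OnePoint.coe_eq_coe.mp h2).symm

lemma L_zero {f : OnePoint (Fin n → ℝ) → OnePoint (Fin n → ℝ)} (hf : IsEnvLike n f) :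
    L f 0 = 0 := by
  have h2 := L_spec (f := f) (hf := hf) (dom f hf).zero_mem
  rw [hf.2.1] at h2
  exact (OnePoint.coe_eq_coe.mp h2).symm

/-- Encode an envelope-like map as a list of pairs of vectors: a generating family of its
domain together with the values on it. -/
noncomputable def encode (f : OnePoint (Fin n → ℝ) → OnePoint (Fin n → ℝ))
    (hf : IsEnvLike n f) : List ((Fin n → ℝ) × (Fin n → ℝ)) :=
  (IsNoetherian.noetherian (dom f hf)).choose.toList.map (fun v => (v, L f v))

lemma encode_injective {f f' : OnePoint (Fin n → ℝ) → OnePoint (Fin n → ℝ)}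
    (hf : IsEnvLike n f) (hf' : IsEnvLike n f')
    (h : encode f hf = encode f' hf') : f = f' := by
  classical
  obtain ⟨hspan⟩ : ∃ _ : Submodule.span ℝ
      (↑(IsNoetherian.noetherian (dom f hf)).choose : Set (Fin n → ℝ)) = dom f hf, True :=
    ⟨(IsNoetherian.noetherian (dom f hf)).choose_spec, trivial⟩
  obtain ⟨hspan'⟩ : ∃ _ : Submodule.span ℝ
      (↑(IsNoetherian.noetherian (dom f' hf')).choose : Set (Fin n → ℝ)) = dom f' hf', True :=
    ⟨(IsNoetherian.noetherian (dom f' hf')).choose_spec, trivial⟩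
  set s := (IsNoetherian.noetherian (dom f hf)).choose with hs
  set s' := (IsNoetherian.noetherian (dom f' hf')).choose with hs'
  have h0 : s.toList.map (fun v => (v, L f v)) = s'.toList.map (fun v => (v, L f' v)) := h
  -- first components agree
  have hlist : s.toList = s'.toList := by
    have := congrArg (List.map Prod.fst) h0
    simpa [List.map_map, Function.comp_def] using this
  have hsets : (↑s : Set (Fin n → ℝ)) = (↑s' : Set (Fin n → ℝ)) := by
    ext a
    simp only [Finset.mem_coe, ← Finset.mem_toList, hlist]
  have hdom : dom f hf = dom f' hf' := by
    rw [← hspan, ← hspan', hsets]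
  -- values agree on generators
  have hvals : ∀ v ∈ s, L f v = L f' v := by
    intro v hv
    have h2 : s.toList.map (fun v => (v, L f v)) = s.toList.map (fun v => (v, L f' v)) := by
      conv_rhs => rw [hlist]
      exact h0
    have := List.map_inj_left.mp h2 v (Finset.mem_toList.mpr hv)
    exact congrArg Prod.snd this
  -- values agree on the whole domain
  have hL : ∀ v ∈ dom f hf, L f v = L f' v := by
    intro v hv
    rw [← hspan] at hv
    induction hv using Submodule.span_induction with
    | mem x hx => exact hvals x hx
    | zero => rw [L_zero hf, L_zero hf']
    | add x y hx hy ihx ihy =>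
        have hx' : x ∈ dom f hf := hspan ▸ hx
        have hy' : y ∈ dom f hf := hspan ▸ hy
        have e1 : L f (x + y) = L f x + L f y := by
          have := L_comb (hf := hf) 1 1 hx' hy'
          simpa using this
        have e2 : L f' (x + y) = L f' x + L f' y := by
          have := L_comb (hf := hf') 1 1 (hdom ▸ hx') (hdom ▸ hy')
          simpa using this
        rw [e1, e2, ihx, ihy]
    | smul a x hx ihx =>
        have hx' : x ∈ dom f hf := hspan ▸ hx
        have e1 : L f (a • x) = a • L f x := by
          have := L_comb (hf := hf) a 0 hx' (dom f hf).zero_mem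
          simpa using this
        have e2 : L f' (a • x) = a • L f' x := by
          have := L_comb (hf := hf') a 0 (hdom ▸ hx') (dom f' hf').zero_mem
          simpa using this
        rw [e1, e2, ihx]
  -- conclude
  funext p
  induction p using OnePoint.rec with
  | infty => rw [hf.1, hf'.1]
  | coe v =>
      by_cases hv : v ∈ dom f hf
      · rw [L_spec hv, L_spec (hdom ▸ hv : v ∈ dom f' hf'), hL v hv]
      · have h1 : f ↑v = ∞ := not_not.mp fun hne => hv hne
        have h2 : f' ↑v = ∞ := not_not.mp fun hne => hv (hdom ▸ (hne : v ∈ dom f' hf'))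
        rw [h1, h2]

end EnvAux

/-- The enveloping semigroup of the `GL(n,ℝ)`-action on the one-point
compactification of `ℝⁿ` has cardinality at most `2^ℵ₀`. -/
theorem env_semigroup_card_le_continuum (n : ℕ) :
    Cardinal.mk (closure (Set.range (glTrans n))) ≤ Cardinal.continuum := by
  classical
  have hinj : Function.Injective
      (fun f : closure (Set.range (glTrans n)) =>
        EnvAux.encode f.1 (EnvAux.isEnvLike_of_mem_closure f.2)) := by
    intro f f' h
    exact Subtype.ext (EnvAux.encode_injective _ _ h)
  refine (Cardinal.mk_le_of_injective hinj).trans ?_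
  have h1 : Cardinal.mk (Fin n → ℝ) ≤ Cardinal.continuum := by
    rw [← Cardinal.power_def, Cardinal.mk_real, Cardinal.mk_fin]
    exact Cardinal.power_nat_le Cardinal.aleph0_le_continuum
  have h2 : Cardinal.mk ((Fin n → ℝ) × (Fin n → ℝ)) ≤ Cardinal.continuum := by
    rw [Cardinal.mk_prod]
    simp only [Cardinal.lift_id]
    calc Cardinal.mk (Fin n → ℝ) * Cardinal.mk (Fin n → ℝ)
        ≤ Cardinal.continuum * Cardinal.continuum := mul_le_mul' h1 h1
      _ = Cardinal.continuum := Cardinal.continuum_mul_self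
  calc Cardinal.mk (List ((Fin n → ℝ) × (Fin n → ℝ)))
      ≤ max Cardinal.aleph0 (Cardinal.mk ((Fin n → ℝ) × (Fin n → ℝ))) :=
        Cardinal.mk_list_le_max _
    _ ≤ Cardinal.continuum := max_le Cardinal.aleph0_le_continuum h2
end

section
/- Every partial linear endomorphism of ℝⁿ arises as an element of the enveloping semigroup of the GL(n,ℝ)-action on X = ℝⁿ ∪ {∞}: for any linear subspace V ⊆ ℝⁿ and linear map f : V → ℝⁿ, the map p : X → X with p(x) = f(x) for x ∈ V and p(y) = ∞ for y ∈ X \ V is a pointwise limit of maps x ↦ gx, g ∈ GL(n,ℝ). -/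
set_option maxHeartbeats 1000000


open OnePoint Matrix

open Filter Topology

/-- Every partial linear endomorphism of `ℝⁿ` arises as an element of the
enveloping semigroup of the `GL(n,ℝ)`-action on `ℝⁿ ∪ {∞}`: the map equal to a
linear map `f` on a subspace `V` and to `∞` off `V` is a pointwise limit of the
extended translation maps. -/
theorem partial_linear_mem_env_semigroup (n : ℕ)
    (V : Submodule ℝ (Fin n → ℝ)) (f : V →ₗ[ℝ] (Fin n → ℝ))
    (p : OnePoint (Fin n → ℝ) → OnePoint (Fin n → ℝ))
    (hpV : ∀ (v : Fin n → ℝ) (hv : v ∈ V),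
      p (v : OnePoint (Fin n → ℝ)) = ((f ⟨v, hv⟩ : Fin n → ℝ) : OnePoint (Fin n → ℝ)))
    (hpVc : ∀ v : Fin n → ℝ, v ∉ V → p (v : OnePoint (Fin n → ℝ)) = ∞)
    (hpinf : p ∞ = ∞) :
    p ∈ closure (Set.range (glTrans n)) := by
  classical
  obtain ⟨W, hW⟩ := V.exists_isCompl
  set π : (Fin n → ℝ) →ₗ[ℝ] V := V.linearProjOfIsCompl W hW with hπdef
  have hπapply : ∀ (v : Fin n → ℝ) (hv : v ∈ V), π v = ⟨v, hv⟩ := fun v hv =>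
    Submodule.linearProjOfIsCompl_apply_left hW ⟨v, hv⟩
  set P : (Fin n → ℝ) →ₗ[ℝ] (Fin n → ℝ) := V.subtype.comp π with hPdef
  have hPmem : ∀ x, P x ∈ V := fun x => (π x).2
  have hπP : ∀ x, π (P x) = π x := by
    intro x
    have := hπapply (P x) (hPmem x)
    rw [this]
    exact Subtype.ext rfl
  set S : Module.End ℝ V := (π.comp f : V →ₗ[ℝ] V) with hSdef
  -- choose small ε k avoiding eigenvalues of S
  have hεex : ∀ k : ℕ, ∃ ε : ℝ, ε ∈ Set.Ioo (0 : ℝ) (1 / (k + 1)) ∧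
      Function.Injective (S + ε • (LinearMap.id : V →ₗ[ℝ] V)) := by
    intro k
    have hfin : Set.Finite {ε : ℝ | Module.End.HasEigenvalue S (-ε)} := by
      have := Module.End.finite_hasEigenvalue S
      exact this.preimage (Set.injOn_of_injective neg_injective)
    have hIoo : (Set.Ioo (0 : ℝ) (1 / (k + 1))).Infinite :=
      Set.Ioo_infinite (by positivity)
    obtain ⟨ε, hε⟩ := (hIoo.diff hfin).nonempty
    refine ⟨ε, hε.1, ?_⟩
    rw [← LinearMap.ker_eq_bot, LinearMap.ker_eq_bot']
    intro m hm
    by_contra hm0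
    refine hε.2 (Module.End.hasEigenvalue_of_hasEigenvector
      (x := m) ⟨Module.End.mem_eigenspace_iff.2 ?_, hm0⟩)
    have hm' : S m + ε • m = 0 := by simpa using hm
    have : S m = -(ε • m) := by linear_combination (norm := module) hm'
    rw [this, neg_smul]
  choose ε hεIoo hεinj using hεex
  have hεpos : ∀ k, 0 < ε k := fun k => (hεIoo k).1
  have hεle : ∀ k, ε k ≤ 1 / (k + 1) := fun k => le_of_lt (hεIoo k).2
  have hε0 : Tendsto ε atTop (𝓝 0) := by
    refine squeeze_zero (fun k => (hεpos k).le) hεle ?_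
    exact tendsto_one_div_add_atTop_nhds_zero_nat
  -- the approximating endomorphisms
  set T : ℕ → ((Fin n → ℝ) →ₗ[ℝ] (Fin n → ℝ)) := fun k =>
    f.comp π + ε k • P + ((k : ℝ) + 1) • (LinearMap.id - P) with hTdef
  have hTapply : ∀ k x, T k x = f (π x) + ε k • P x + ((k : ℝ) + 1) • (x - P x) := by
    intro k x; simp [hTdef]
  have hTinj : ∀ k, Function.Injective (T k) := by
    intro k
    rw [← LinearMap.ker_eq_bot, LinearMap.ker_eq_bot']
    intro x hx
    have hπx : π x = 0 := by
      have h1 : π (T k x) = (S + ε k • (LinearMap.id : V →ₗ[ℝ] V)) (π x) := by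
        rw [hTapply, map_add, map_add, LinearMap.map_smul, LinearMap.map_smul, map_sub,
          hπP, sub_self, smul_zero, add_zero]
        simp only [LinearMap.add_apply, LinearMap.smul_apply, LinearMap.id_apply]
        rfl
      have h2 : (S + ε k • (LinearMap.id : V →ₗ[ℝ] V)) (π x) = 0 := by
        rw [← h1, hx, map_zero]
      have := hεinj k (a₁ := π x) (a₂ := 0) (by simpa using h2)
      exact this
    have hPx : P x = 0 := by
      simp [hPdef, LinearMap.comp_apply, hπx]
    have hx' : ((k : ℝ) + 1) • x = 0 := by
      have := hx
      rw [hTapply, hπx, hPx] at this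
      simpa using this
    have hk : ((k : ℝ) + 1) ≠ 0 := by positivity
    exact (smul_eq_zero.1 hx').resolve_left hk
  have hTbij : ∀ k, Function.Bijective (T k) := fun k =>
    ⟨hTinj k, LinearMap.injective_iff_surjective.1 (hTinj k)⟩
  -- package as GL elements
  set e : ℕ → ((Fin n → ℝ) ≃ₗ[ℝ] (Fin n → ℝ)) := fun k =>
    LinearEquiv.ofBijective (T k) (hTbij k) with hedef
  set u : ℕ → ((Fin n → ℝ) →ₗ[ℝ] (Fin n → ℝ))ˣ := fun k =>
    ⟨T k, (e k).symm.toLinearMap,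
      LinearMap.ext fun x => (e k).apply_symm_apply x,
      LinearMap.ext fun x => (e k).symm_apply_apply x⟩ with hudef
  set g : ℕ → GL (Fin n) ℝ := fun k =>
    Units.map (LinearMap.toMatrixAlgEquiv' :
      ((Fin n → ℝ) →ₗ[ℝ] (Fin n → ℝ)) ≃ₐ[ℝ] Matrix (Fin n) (Fin n) ℝ).toAlgHom.toRingHom.toMonoidHom
      (u k) with hgdef
  have hmulVec : ∀ k (v : Fin n → ℝ),
      ((g k : Matrix (Fin n) (Fin n) ℝ)).mulVec v = T k v := by
    intro k v
    have h1 : (g k : Matrix (Fin n) (Fin n) ℝ) = LinearMap.toMatrix' (T k) := rfl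
    rw [h1, ← Matrix.toLin'_apply, Matrix.toLin'_toMatrix']
  -- convergence
  have key : Tendsto (fun k => glTrans n (g k)) atTop (𝓝 p) := by
    rw [tendsto_pi_nhds]
    intro x
    induction x using OnePoint.rec with
    | infty =>
        simp only [glTrans, OnePoint.map_infty, hpinf]
        exact tendsto_const_nhds
    | coe v =>
        simp only [glTrans, OnePoint.map_some, hmulVec]
        by_cases hv : v ∈ V
        · rw [hpV v hv]
          have hTv : ∀ k, T k v = f ⟨v, hv⟩ + ε k • v := by
            intro k
            rw [hTapply]
            have hπv : π v = ⟨v, hv⟩ := hπapply v hv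
            have hPv : P v = v := by simp [hPdef, LinearMap.comp_apply, hπv]
            rw [hπv, hPv]
            simp
          simp only [hTv]
          have : Tendsto (fun k => f ⟨v, hv⟩ + ε k • v) atTop (𝓝 (f ⟨v, hv⟩)) := by
            have h2 : Tendsto (fun k => ε k • v) atTop (𝓝 ((0 : ℝ) • v)) :=
              hε0.smul_const v
            rw [zero_smul] at h2
            simpa using tendsto_const_nhds.add h2
          exact ((OnePoint.continuous_coe).tendsto _).comp this
        · rw [hpVc v hv]
          -- norm of T k v tends to infinity
          set w : Fin n → ℝ := v - P v with hwdef
          have hw0 : w ≠ 0 := by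
            intro h
            apply hv
            have : v = P v := by
              have := sub_eq_zero.1 h
              exact this
            rw [this]; exact hPmem v
          have hwpos : 0 < ‖w‖ := norm_pos_iff.2 hw0
          set C : ℝ := ‖f (π v)‖ + ‖P v‖ with hCdef
          have hlow : ∀ k : ℕ, ((k : ℝ) + 1) * ‖w‖ - C ≤ ‖T k v‖ := by
            intro k
            have h1 : T k v = f (π v) + ε k • P v + ((k : ℝ) + 1) • w := by
              rw [hTapply]
            have h2 : ((k : ℝ) + 1) • w = T k v - (f (π v) + ε k • P v) := by
              rw [h1]; abel
            have h3 : ‖((k : ℝ) + 1) • w‖ ≤ ‖T k v‖ + ‖f (π v) + ε k • P v‖ := by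
              rw [h2]; exact norm_sub_le _ _
            have h4 : ‖f (π v) + ε k • P v‖ ≤ ‖f (π v)‖ + ‖P v‖ := by
              refine (norm_add_le _ _).trans ?_
              have : ‖ε k • P v‖ ≤ ‖P v‖ := by
                rw [norm_smul, Real.norm_eq_abs, abs_of_pos (hεpos k)]
                have h5 : ε k ≤ 1 := (hεle k).trans (by
                  rw [div_le_one (by positivity)]
                  linarith [Nat.cast_nonneg (α := ℝ) k])
                nlinarith [norm_nonneg (P v)]
              linarith
            have h6 : ‖((k : ℝ) + 1) • w‖ = ((k : ℝ) + 1) * ‖w‖ := by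
              rw [norm_smul, Real.norm_eq_abs, abs_of_pos (by positivity)]
            rw [h6] at h3
            simp only [hCdef]
            linarith
          have hnorm : Tendsto (fun k => ‖T k v‖) atTop atTop := by
            refine tendsto_atTop_mono hlow ?_
            have h1 : Tendsto (fun k : ℕ => ((k : ℝ) + 1)) atTop atTop :=
              tendsto_atTop_add_const_right _ _ tendsto_natCast_atTop_atTop
            have h2 := tendsto_atTop_add_const_right atTop (-C) (h1.atTop_mul_const hwpos)
            simpa [sub_eq_add_neg] using h2
          have hco : Tendsto (fun k => T k v) atTop (coclosedCompact (Fin n → ℝ)) := by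
            rw [coclosedCompact_eq_cocompact, ← Metric.cobounded_eq_cocompact, ← comap_norm_atTop,
              tendsto_comap_iff]
            exact hnorm
          exact OnePoint.tendsto_coe_infty.comp hco
  exact mem_closure_of_tendsto key (Eventually.of_forall fun k => Set.mem_range_self (g k))
end

section
/- If an action of a group G on a uniform space (X,𝒰) is weakly mixing and non-sensitive, then X has at most one point. -/
open scoped Uniformity Topology

/-!
Non-sensitivity gives, for a small symmetric entourage `δ`, a nonempty open set `O` all of whose
translates `g • O` are `δ`-small. Weak mixing moves some pair of points of `O` into any product
of neighbourhoods of two given points `x` and `y`, so `x` and `y` are `δ ○ δ ○ δ`-close. Hence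
every entourage is all of `X × X`, which in a T₀ space leaves at most one point.
-/

section

variable (G X : Type*) [SMul G X]

def IsWeaklyMixing [TopologicalSpace X] : Prop :=
  ∀ O₁ O₂ : Set (X × X), IsOpen O₁ → IsOpen O₂ → O₁.Nonempty → O₂.Nonempty →
    ∃ g : G, ((fun p : X × X => (g • p.1, g • p.2)) '' O₁ ∩ O₂).Nonempty

def IsNonSensitive [UniformSpace X] : Prop :=
  ∀ ε ∈ 𝓤 X, ∃ O : Set X, IsOpen O ∧ O.Nonempty ∧
    ∀ (g : G) (x y : X), x ∈ O → y ∈ O → (g • x, g • y) ∈ ε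

end

theorem IsWeaklyMixing.exists_smul_mem_nhds {G X : Type*} [SMul G X] [TopologicalSpace X]
    (hwm : IsWeaklyMixing G X) {O : Set X} (hO : IsOpen O) (hO_ne : O.Nonempty)
    {x y : X} {U V : Set X} (hU : U ∈ 𝓝 x) (hV : V ∈ 𝓝 y) :
    ∃ g : G, ∃ a ∈ O, ∃ b ∈ O, g • a ∈ U ∧ g • b ∈ V := by
  obtain ⟨g, _, ⟨⟨a, b⟩, ⟨ha, hb⟩, rfl⟩, hgaU, hgbV⟩ :=
    hwm (O ×ˢ O) (interior U ×ˢ interior V) (hO.prod hO) (isOpen_interior.prod isOpen_interior)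
      (hO_ne.prod hO_ne) ⟨(x, y), mem_interior_iff_mem_nhds.2 hU, mem_interior_iff_mem_nhds.2 hV⟩
  exact ⟨g, a, ha, b, hb, interior_subset hgaU, interior_subset hgbV⟩

theorem uniformity_eq_top_of_isWeaklyMixing_of_isNonSensitive {G X : Type*} [SMul G X]
    [UniformSpace X] (hwm : IsWeaklyMixing G X) (hns : IsNonSensitive G X) : 𝓤 X = ⊤ := by
  refine top_unique fun ε hε => Filter.mem_top.2 <| Set.eq_univ_of_forall fun ⟨x, y⟩ => ?_
  obtain ⟨δ, hδ, hδ_symm, hδε⟩ := comp_comp_symm_mem_uniformity_sets hε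
  obtain ⟨O, hO, hO_ne, hO_small⟩ := hns δ hδ
  obtain ⟨g, a, ha, b, hb, hga, hgb⟩ := hwm.exists_smul_mem_nhds hO hO_ne
    (UniformSpace.ball_mem_nhds x hδ) (UniformSpace.ball_mem_nhds y hδ)
  exact hδε ⟨g • b, ⟨g • a, hga, hO_small g a b ha hb⟩, hδ_symm.symm _ _ hgb⟩

theorem subsingleton_of_uniformity_eq_top {X : Type*} [UniformSpace X] [T0Space X]
    (h : 𝓤 X = ⊤) : Subsingleton X :=
  ⟨fun _ _ => eq_of_uniformity fun hV => by
    rw [h, Filter.mem_top] at hV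
    exact hV ▸ Set.mem_univ _⟩

theorem weaklyMixing_nonSensitive_is_trivial_general {G X : Type*} [Group G]
    [UniformSpace X] [T2Space X] [MulAction G X]
    (hwm : ∀ O₁ O₂ : Set (X × X), IsOpen O₁ → IsOpen O₂ →
      O₁.Nonempty → O₂.Nonempty →
      ∃ g : G, ((fun p : X × X => (g • p.1, g • p.2)) '' O₁ ∩ O₂).Nonempty)
    (hns : ∀ ε ∈ 𝓤 X, ∃ O : Set X, IsOpen O ∧ O.Nonempty ∧
      ∀ (g : G) (x y : X), x ∈ O → y ∈ O → (g • x, g • y) ∈ ε) :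
    Subsingleton X :=
  subsingleton_of_uniformity_eq_top
    (uniformity_eq_top_of_isWeaklyMixing_of_isNonSensitive hwm hns)

/-- A weakly mixing non-sensitive action on a Hausdorff uniform space forces
the space to have at most one point. -/
theorem weaklyMixing_nonSensitive_is_trivial {G X : Type*} [Group G]
    [UniformSpace X] [T2Space X] [MulAction G X]
    (hunif : ∀ g : G, UniformContinuous fun x : X => g • x)
    (hwm : ∀ O₁ O₂ : Set (X × X), IsOpen O₁ → IsOpen O₂ →
      O₁.Nonempty → O₂.Nonempty →
      ∃ g : G, ((fun p : X × X => (g • p.1, g • p.2)) '' O₁ ∩ O₂).Nonempty)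
    (hns : ∀ ε ∈ 𝓤 X, ∃ O : Set X, IsOpen O ∧ O.Nonempty ∧
      ∀ (g : G) (x y : X), x ∈ O → y ∈ O → (g • x, g • y) ∈ ε) :
    Subsingleton X :=
  weaklyMixing_nonSensitive_is_trivial_general hwm hns
end
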